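/- Independence of the fractional index from the choice of parametrix: in a unital algebra with a linear functional τ satisfying τ(st) = τ(ts) whenever s, t lie in a fixed ideal J, if a is an element with two 'parametrices' r, r' (i.e. 1 − ar, 1 − ra, 1 − ar', 1 − r'a ∈ J), then τ(ar − ra) = τ(ar' − r'a). -/
import Mathlib


/-- Independence of the fractional analytic index from the choice of parametrix: if `τ` is a
linear functional on a `ℂ`-algebra `A` which is tracial relative to a two-sided ideal `J`
(i.e. `τ(xy) = τ(yx)` whenever `x ∈ J`), and `r`, `r'` are both parametrices of `a` (i.e.
`1 − ar, 1 − ra, 1 − ar', 1 − r'a ∈ J`), then `τ(ar − ra) = τ(ar' − r'a)`. -/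
theorem fractional_index_parametrix_independent
    {A : Type*} [Ring A] [Algebra ℂ A]
    (J : Set A)
    (hJsub : ∀ x ∈ J, ∀ y ∈ J, x - y ∈ J)
    (hJabs : ∀ x ∈ J, ∀ a : A, a * x ∈ J ∧ x * a ∈ J)
    (τ : A →ₗ[ℂ] ℂ)
    (htr : ∀ x ∈ J, ∀ y : A, τ (x * y) = τ (y * x))
    (a r r' : A)
    (h₁ : 1 - a * r ∈ J) (h₂ : 1 - r * a ∈ J)
    (h₃ : 1 - a * r' ∈ J) (h₄ : 1 - r' * a ∈ J) :
    τ (a * r - r * a) = τ (a * r' - r' * a) := by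
  have hs : r - r' ∈ J := by
    have h5 : r * (1 - a * r') ∈ J := (hJabs _ h₃ r).1
    have h6 : (1 - r * a) * r' ∈ J := (hJabs _ h₂ r').2
    have h7 := hJsub _ h5 _ h6
    have : r * (1 - a * r') - (1 - r * a) * r' = r - r' := by noncomm_ring
    rwa [this] at h7
  have hkey := htr _ hs a
  have expand : a * r - r * a
      = (a * r' - r' * a) + (a * (r - r') - (r - r') * a) := by noncomm_ring
  rw [expand, map_add, map_sub (f := τ) (a * (r - r')), hkey, sub_self, add_zero]
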